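/- The map sending a blocking-Nim_k position to the pair (XOR of the quotients ⌊a_i/k⌋, maximum of the remainders a_i mod k) is a monoid homomorphism from the free commutative monoid of positions to the product of (ℕ, XOR) with the k-element linear order {0,...,k−1} under max, and the outcome function (for every constraint) factors through this map. -/

import Mathlib

instance : Std.Commutative (α := ℕ) (· ^^^ ·) := ⟨Nat.xor_comm⟩
instance : Std.Associative (α := ℕ) (· ^^^ ·) := ⟨Nat.xor_assoc⟩

/-- The nim-sum (bitwise XOR) of a finite multiset. -/
def nimSum (s : Multiset ℕ) : ℕ := Multiset.fold (· ^^^ ·) 0 s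

abbrev BState := Multiset ℕ × Finset ℕ

/-- A move in blocking Nim with parameter `k`. -/
def BMove (k : ℕ) (p q : BState) : Prop :=
  ∃ a ∈ p.1, ∃ b < a, (a - b) ∉ p.2 ∧ q.1 = b ::ₘ p.1.erase a ∧
    q.2.card = k - 1 ∧ 0 ∉ q.2

mutual
inductive BP (k : ℕ) : BState → Prop
  | mk (p : BState) : (∀ q, BMove k p q → BN k q) → BP k p

inductive BN (k : ℕ) : BState → Prop
  | mk (p q : BState) : BMove k p q → BP k q → BN k p
end

/-- The blocking-Nim_k invariant of a position: the XOR of the quotients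
`⌊aᵢ/k⌋` together with the maximum of the remainders `aᵢ mod k`. -/
def bInv (k : ℕ) (s : Multiset ℕ) : ℕ × ℕ :=
  (nimSum (s.map (· / k)), (s.map (· % k)).sup)

/-!
Call a position a P-position when its quotient nim-sum is `0` and its blocked set contains
`1, …, max remainder`. From a P-position every unblocked move lowers a heap by more than its
remainder, hence strictly lowers its quotient and makes the quotient nim-sum nonzero. From any
other position the mover reaches a P-position and blocks `{1, …, k - 1}`: if the quotient
nim-sum is nonzero, the usual Nim move on the quotients can be realised with `k` different
remainders, and at most `k - 1` of the corresponding differences are blocked; otherwise some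
unblocked `j ≤ max remainder` can be taken from a heap without changing its quotient. So the
outcome is decided by the P-position condition, which only depends on `bInv k`.
-/

lemma nimSum_cons (a : ℕ) (s : Multiset ℕ) : nimSum (a ::ₘ s) = a ^^^ nimSum s :=
  Multiset.fold_cons_left _ _ _ _

lemma nimSum_add (s t : Multiset ℕ) : nimSum (s + t) = nimSum s ^^^ nimSum t :=
  Multiset.fold_add (α := ℕ) (· ^^^ ·) 0 0 s t

-- Heap `a` is lowered to `c ^^^ nimSum s ^^^ a`, which makes the nim-sum `c`.
lemma exists_xor_nimSum_xor_lt {c : ℕ} {s : Multiset ℕ} (h : c < nimSum s) :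
    ∃ a ∈ s, c ^^^ nimSum s ^^^ a < a := by
  induction s using Multiset.induction generalizing c with
  | empty => exact absurd h (Nat.not_lt_zero c)
  | cons x t ih =>
    rw [nimSum_cons] at h ⊢
    rcases Nat.lt_xor_cases h with hx | ht
    · refine ⟨x, Multiset.mem_cons_self x t, ?_⟩
      rwa [Nat.xor_comm x, ← Nat.xor_assoc, Nat.xor_xor_cancel_right]
    · obtain ⟨a, ha, hlt⟩ := ih ht
      refine ⟨a, Multiset.mem_cons_of_mem ha, ?_⟩
      rwa [← Nat.xor_assoc]

lemma bInv_add (k : ℕ) (s t : Multiset ℕ) :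
    bInv k (s + t) = ((bInv k s).1 ^^^ (bInv k t).1, max (bInv k s).2 (bInv k t).2) := by
  simp only [bInv, Multiset.map_add, nimSum_add, Multiset.sup_add]

lemma bInv_snd_lt {k : ℕ} (hk : 0 < k) (s : Multiset ℕ) : (bInv k s).2 < k := by
  have : (bInv k s).2 ≤ k - 1 := Multiset.sup_le.2 fun r hr => by
    obtain ⟨a, -, rfl⟩ := Multiset.mem_map.1 hr
    have := Nat.mod_lt a hk
    omega
  omega

lemma bInv_fst_cons_erase (k : ℕ) {s : Multiset ℕ} {a : ℕ} (b : ℕ) (ha : a ∈ s) :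
    (bInv k (b ::ₘ s.erase a)).1 = b / k ^^^ a / k ^^^ (bInv k s).1 := by
  conv_rhs => rw [← Multiset.cons_erase ha]
  simp only [bInv, Multiset.map_cons, nimSum_cons]
  rw [Nat.xor_assoc, ← Nat.xor_assoc (a / k), Nat.xor_self, Nat.zero_xor]

lemma div_lt_div_of_mod_lt_sub {a b k : ℕ} (h : a % k < a - b) : b / k < a / k :=
  Nat.div_lt_of_lt_mul (by have := Nat.mod_add_div a k; omega)

def IsPPosition (k : ℕ) (p : BState) : Prop :=
  (bInv k p.1).1 = 0 ∧ Finset.Icc 1 (bInv k p.1).2 ⊆ p.2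

lemma BMove.sum_lt {k : ℕ} {p q : BState} (h : BMove k p q) : q.1.sum < p.1.sum := by
  obtain ⟨a, ha, b, hba, -, hq, -⟩ := h
  rw [hq, Multiset.sum_cons, ← Multiset.sum_erase ha]
  omega

lemma BMove.card_eq {k : ℕ} {p q : BState} (h : BMove k p q) : q.2.card = k - 1 := by
  obtain ⟨-, -, -, -, -, -, hcard, -⟩ := h
  exact hcard

lemma not_isPPosition_of_bMove {k : ℕ} {p q : BState} (hp : IsPPosition k p)
    (h : BMove k p q) : ¬IsPPosition k q := by
  obtain ⟨a, ha, b, hba, hS, hq, -⟩ := h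
  intro hqP
  have hrem : a % k ≤ (bInv k p.1).2 := Multiset.le_sup (Multiset.mem_map_of_mem _ ha)
  have hlt : a % k < a - b := by
    by_contra
    exact hS (hp.2 (Finset.mem_Icc.2 ⟨by omega, by omega⟩))
  have hdiv := div_lt_div_of_mod_lt_sub hlt
  have hX := hqP.1
  rw [hq, bInv_fst_cons_erase k b ha, hp.1, Nat.xor_zero, Nat.xor_eq_zero_iff] at hX
  omega

lemma exists_bMove_isPPosition_of_xor_eq_zero {k : ℕ} (hk : 0 < k) {s : Multiset ℕ}
    {S : Finset ℕ} {a b : ℕ} (ha : a ∈ s) (hba : b < a) (hS : a - b ∉ S)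
    (hX : b / k ^^^ a / k ^^^ (bInv k s).1 = 0) :
    ∃ q, BMove k (s, S) q ∧ IsPPosition k q := by
  refine ⟨(b ::ₘ s.erase a, Finset.Icc 1 (k - 1)), ⟨a, ha, b, hba, hS, rfl, by simp, by simp⟩,
    ?_, ?_⟩
  · rwa [bInv_fst_cons_erase k b ha]
  · exact Finset.Icc_subset_Icc_right (Nat.le_sub_one_of_lt (bInv_snd_lt hk _))

lemma exists_bMove_isPPosition_of_fst_ne_zero {k : ℕ} {s : Multiset ℕ} {S : Finset ℕ}
    (hS : S.card < k) (hX : (bInv k s).1 ≠ 0) :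
    ∃ q, BMove k (s, S) q ∧ IsPPosition k q := by
  have hk : 0 < k := by omega
  obtain ⟨x, hx, hlt⟩ := exists_xor_nimSum_xor_lt (Nat.pos_of_ne_zero hX)
  obtain ⟨a, ha, rfl⟩ := Multiset.mem_map.1 hx
  set Q := (bInv k s).1 ^^^ a / k with hQ
  have hQa : k * Q + k ≤ a := by
    have hQlt : Q + 1 ≤ a / k := by rwa [Nat.zero_xor] at hlt
    have := Nat.mod_add_div a k
    have := Nat.mul_le_mul_left k hQlt
    rw [Nat.mul_succ] at this
    omega
  -- The `k` heights `k * Q, …, k * Q + k - 1` all have quotient `Q`, and `S` cannot block all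
  -- `k` differences.
  obtain ⟨d, hd, hdS⟩ := Finset.exists_mem_notMem_of_card_lt_card
    (s := S) (t := Finset.Ioc (a - (k * Q + k)) (a - k * Q)) (by rw [Nat.card_Ioc]; omega)
  rw [Finset.mem_Ioc] at hd
  have hdiv : (a - d) / k = Q :=
    Nat.div_eq_of_lt_le (by rw [mul_comm]; omega) (by rw [add_mul, one_mul, mul_comm]; omega)
  refine exists_bMove_isPPosition_of_xor_eq_zero hk ha (b := a - d) (by omega)
    (by rwa [Nat.sub_sub_self (by omega)]) ?_
  rw [hdiv, hQ, Nat.xor_xor_cancel_right, Nat.xor_self]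

lemma exists_bMove_isPPosition_of_not_subset {k : ℕ} (hk : 0 < k) {s : Multiset ℕ}
    {S : Finset ℕ} (hX : (bInv k s).1 = 0) (h : ¬Finset.Icc 1 (bInv k s).2 ⊆ S) :
    ∃ q, BMove k (s, S) q ∧ IsPPosition k q := by
  obtain ⟨j, hj, hjS⟩ := Finset.not_subset.1 h
  rw [Finset.mem_Icc] at hj
  obtain ⟨a, ha, hja⟩ : ∃ a ∈ s, j ≤ a % k := by
    by_contra! hlt
    have : (bInv k s).2 ≤ j - 1 := Multiset.sup_le.2 fun r hr => by
      obtain ⟨a, ha, rfl⟩ := Multiset.mem_map.1 hr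
      have := hlt a ha
      omega
    omega
  have hdiv : (a - j) / k = a / k := by
    have := Nat.mod_add_div a k
    rw [show a - j = a % k - j + k * (a / k) by omega, Nat.add_mul_div_left _ _ hk,
      Nat.div_eq_of_lt (by have := Nat.mod_lt a hk; omega), Nat.zero_add]
  have := Nat.mod_le a k
  refine exists_bMove_isPPosition_of_xor_eq_zero hk ha (b := a - j) (by omega)
    (by rwa [Nat.sub_sub_self (by omega)]) ?_
  rw [hdiv, Nat.xor_self, hX, Nat.zero_xor]

lemma exists_bMove_isPPosition {k : ℕ} {p : BState} (hS : p.2.card < k)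
    (hp : ¬IsPPosition k p) : ∃ q, BMove k p q ∧ IsPPosition k q := by
  obtain ⟨s, S⟩ := p
  by_cases hX : (bInv k s).1 = 0
  · exact exists_bMove_isPPosition_of_not_subset (by omega) hX fun h => hp ⟨hX, h⟩
  · exact exists_bMove_isPPosition_of_fst_ne_zero hS hX

theorem bP_iff_isPPosition_and_bN_iff_not {k : ℕ} (hk : 0 < k) (p : BState)
    (hp : p.2.card = k - 1) :
    (BP k p ↔ IsPPosition k p) ∧ (BN k p ↔ ¬IsPPosition k p) := by
  have ih (q : BState) (hq : BMove k p q) :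
      (BP k q ↔ IsPPosition k q) ∧ (BN k q ↔ ¬IsPPosition k q) :=
    bP_iff_isPPosition_and_bN_iff_not hk q hq.card_eq
  refine ⟨⟨fun hP => ?_, fun hpP => ?_⟩, ⟨fun hN hpP => ?_, fun hpP => ?_⟩⟩
  · obtain ⟨_, hmoves⟩ := hP
    by_contra hpP
    obtain ⟨q, hq, hqP⟩ := exists_bMove_isPPosition (by omega) hpP
    exact (ih q hq).2.1 (hmoves q hq) hqP
  · exact BP.mk p fun q hq => (ih q hq).2.2 (not_isPPosition_of_bMove hpP hq)
  · obtain ⟨_, q, hq, hqP⟩ := hN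
    exact not_isPPosition_of_bMove hpP hq ((ih q hq).1.1 hqP)
  · obtain ⟨q, hq, hqP⟩ := exists_bMove_isPPosition (by omega) hpP
    exact BN.mk p q hq ((ih q hq).1.2 hqP)
termination_by p.1.sum
decreasing_by exact hq.sum_lt

lemma bP_iff_isPPosition {k : ℕ} (hk : 0 < k) {s : Multiset ℕ} {S : Finset ℕ}
    (hS : S.card = k - 1) : BP k (s, S) ↔ IsPPosition k (s, S) :=
  (bP_iff_isPPosition_and_bN_iff_not hk (s, S) hS).1

/-- The map `bInv k` is a monoid homomorphism from the free commutative monoid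
of positions to the product of `(ℕ, XOR)` with the `k`-element linear order
`{0, …, k-1}` under `max`, and the outcome function (for every constraint set)
factors through it. -/
theorem stmt10 (k : ℕ) (hk : 1 ≤ k) :
    (∀ s t : Multiset ℕ,
      bInv k (s + t) = ((bInv k s).1 ^^^ (bInv k t).1, max (bInv k s).2 (bInv k t).2)) ∧
    (∀ s : Multiset ℕ, (bInv k s).2 < k) ∧
    (∀ s t : Multiset ℕ, bInv k s = bInv k t →
      ∀ S : Finset ℕ, S.card = k - 1 → (∀ j ∈ S, 0 < j) →
        (BP k (s, S) ↔ BP k (t, S))) := by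
  refine ⟨bInv_add k, bInv_snd_lt hk, fun s t hst S hS _ => ?_⟩
  rw [bP_iff_isPPosition hk hS, bP_iff_isPPosition hk hS]
  simp only [IsPPosition, hst]
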